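/- Strong convergence of resolvents implies strong convergence of the approximating forms applied to restrictions: if E_k G_λ^{(k)} π_k f → G_λ f in H for every f ∈ H and λ > 0, then lim_{k→∞} a_λ^{(k)}(π_k u, π_k u) = a_λ(u, u) for every u ∈ H and λ > 0, where a_λ^{(k)}(v, v) = λ⟨v − λ G_λ^{(k)} v, v⟩_k and a_λ(u, u) = λ⟨u − λ G_λ u, u⟩. -/

import Mathlib

open Filter
open scoped Topology

theorem tendsto_inner_apply_of_uniformly_bounded {ι E : Type*} {F : ι → Type*}
    [NormedAddCommGroup E] [InnerProductSpace ℝ E]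
    [∀ i, NormedAddCommGroup (F i)] [∀ i, InnerProductSpace ℝ (F i)]
    {l : Filter ι} (T : ∀ i, E →L[ℝ] F i) {C : ℝ} (hT : ∀ i, ‖T i‖ ≤ C)
    (hinner : ∀ a b : E,
      Tendsto (fun i => (inner ℝ (T i a) (T i b) : ℝ)) l (𝓝 (inner ℝ a b : ℝ)))
    {x : ι → E} {x₀ : E} (hx : Tendsto x l (𝓝 x₀)) (y : E) :
    Tendsto (fun i => (inner ℝ (T i (x i)) (T i y) : ℝ)) l (𝓝 (inner ℝ x₀ y : ℝ)) := by
  have hbound (i : ι) (z : E) : ‖T i z‖ ≤ C * ‖z‖ :=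
    (T i).le_of_opNorm_le (hT i) z
  have herror : Tendsto (fun i => (inner ℝ (T i (x i - x₀)) (T i y) : ℝ)) l (𝓝 0) := by
    have hdist : Tendsto (fun i => C * ‖x i - x₀‖ * (C * ‖y‖)) l (𝓝 0) := by
      simpa using ((tendsto_iff_norm_sub_tendsto_zero.mp hx).const_mul C).mul_const (C * ‖y‖)
    refine squeeze_zero_norm (fun i => ?_) hdist
    calc ‖(inner ℝ (T i (x i - x₀)) (T i y) : ℝ)‖
        ≤ ‖T i (x i - x₀)‖ * ‖T i y‖ := norm_inner_le_norm _ _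
      _ ≤ C * ‖x i - x₀‖ * (C * ‖y‖) :=
        mul_le_mul (hbound i _) (hbound i y) (norm_nonneg _)
          ((norm_nonneg _).trans (hbound i _))
  simpa [inner_sub_left] using herror.add (hinner x₀ y)

theorem stmt14_general {H : Type*} [NormedAddCommGroup H] [InnerProductSpace ℝ H]
    [CompleteSpace H]
    {Hk : ℕ → Type*} [∀ k, NormedAddCommGroup (Hk k)]
    [∀ k, InnerProductSpace ℝ (Hk k)] [∀ k, CompleteSpace (Hk k)]
    (E : ∀ k, Hk k →L[ℝ] H)
    (hleft : ∀ k (v : Hk k), (ContinuousLinearMap.adjoint (E k)) (E k v) = v)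
    (hbd : ∃ C : ℝ, ∀ k, ‖ContinuousLinearMap.adjoint (E k)‖ ≤ C)
    (hinner : ∀ u v : H,
      Tendsto
        (fun k =>
          (inner ℝ ((ContinuousLinearMap.adjoint (E k)) u)
              ((ContinuousLinearMap.adjoint (E k)) v) : ℝ))
        atTop (𝓝 (inner ℝ u v : ℝ)))
    (Gk : ∀ k, ℝ → (Hk k →L[ℝ] Hk k)) (G : ℝ → (H →L[ℝ] H))
    (hconv : ∀ lam : ℝ, 0 < lam → ∀ f : H,
      Tendsto
        (fun k => E k (Gk k lam ((ContinuousLinearMap.adjoint (E k)) f)))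
        atTop (𝓝 (G lam f))) :
    ∀ lam : ℝ, 0 < lam → ∀ u : H,
      Tendsto
        (fun k =>
          lam *
            (inner ℝ
                ((ContinuousLinearMap.adjoint (E k)) u -
                  lam • Gk k lam ((ContinuousLinearMap.adjoint (E k)) u))
                ((ContinuousLinearMap.adjoint (E k)) u) : ℝ))
        atTop (𝓝 (lam * (inner ℝ (u - lam • G lam u) u : ℝ))) := by
  intro lam hlam u
  obtain ⟨C, hC⟩ := hbd
  have hresolvent : Tendsto
      (fun k => (inner ℝ (Gk k lam ((ContinuousLinearMap.adjoint (E k)) u))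
        ((ContinuousLinearMap.adjoint (E k)) u) : ℝ))
      atTop (𝓝 (inner ℝ (G lam u) u : ℝ)) := by
    -- `π_k E_k = id` exhibits this as `⟨π_k f_k, π_k u⟩` with `f_k = E_k G_k π_k u → G u`.
    simpa only [hleft] using
      tendsto_inner_apply_of_uniformly_bounded _ hC hinner (hconv lam hlam u) u
  simpa only [inner_sub_left, real_inner_smul_left] using
    ((hinner u u).sub (hresolvent.const_mul lam)).const_mul lam

/-- Strong convergence of the resolvents `E_k G_λ^{(k)} π_k → G_λ` implies
convergence of the approximating forms on restrictions:
`a_λ^{(k)}(π_k u, π_k u) = λ⟨π_k u - λ G_λ^{(k)} π_k u, π_k u⟩_k` converges to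
`a_λ(u,u) = λ⟨u - λ G_λ u, u⟩` for every `u ∈ H` and `λ > 0`. -/
theorem stmt14 {H : Type*} [NormedAddCommGroup H] [InnerProductSpace ℝ H]
    [CompleteSpace H]
    {Hk : ℕ → Type*} [∀ k, NormedAddCommGroup (Hk k)]
    [∀ k, InnerProductSpace ℝ (Hk k)] [∀ k, CompleteSpace (Hk k)]
    (E : ∀ k, Hk k →L[ℝ] H)
    (hleft : ∀ k (v : Hk k), (ContinuousLinearMap.adjoint (E k)) (E k v) = v)
    (hbd : ∃ C : ℝ, ∀ k, ‖ContinuousLinearMap.adjoint (E k)‖ ≤ C)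
    (hinner : ∀ u v : H,
      Tendsto
        (fun k =>
          (inner ℝ ((ContinuousLinearMap.adjoint (E k)) u)
              ((ContinuousLinearMap.adjoint (E k)) v) : ℝ))
        atTop (𝓝 (inner ℝ u v : ℝ)))
    (Gk : ∀ k, ℝ → (Hk k →L[ℝ] Hk k)) (G : ℝ → (H →L[ℝ] H))
    (hcontrk : ∀ k (lam : ℝ), 0 < lam → ∀ v : Hk k,
      lam * ‖Gk k lam v‖ ≤ ‖v‖)
    (hcontr : ∀ lam : ℝ, 0 < lam → ∀ u : H, lam * ‖G lam u‖ ≤ ‖u‖)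
    (hconv : ∀ lam : ℝ, 0 < lam → ∀ f : H,
      Tendsto
        (fun k => E k (Gk k lam ((ContinuousLinearMap.adjoint (E k)) f)))
        atTop (𝓝 (G lam f))) :
    ∀ lam : ℝ, 0 < lam → ∀ u : H,
      Tendsto
        (fun k =>
          lam *
            (inner ℝ
                ((ContinuousLinearMap.adjoint (E k)) u -
                  lam • Gk k lam ((ContinuousLinearMap.adjoint (E k)) u))
                ((ContinuousLinearMap.adjoint (E k)) u) : ℝ))
        atTop (𝓝 (lam * (inner ℝ (u - lam • G lam u) u : ℝ))) :=
  stmt14_general E hleft hbd hinner Gk G hconv
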